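/- For every real number x ≥ 1 and every natural number m, the truncated cube-root nested radical satisfies C m x ≤ 2^{3/2}(x+1). -/
import Mathlib


noncomputable def C : ℕ → ℝ → ℝ
  | 0, _ => 0
  | m + 1, y => (1 + 3 * y + y ^ 2 * C m (y + 2)) ^ (1 / 3 : ℝ)

lemma C_nonneg : ∀ (m : ℕ) (y : ℝ), 0 ≤ y → 0 ≤ C m y
  | 0, _, _ => le_refl 0
  | m + 1, y, hy => by
    have h := C_nonneg m (y + 2) (by linarith)
    show (0:ℝ) ≤ (1 + 3 * y + y ^ 2 * C m (y + 2)) ^ (1 / 3 : ℝ)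
    apply Real.rpow_nonneg
    positivity

theorem nested_cbrt_upper_bound (x : ℝ) (hx : 1 ≤ x) (m : ℕ) :
    C m x ≤ (2 : ℝ) ^ ((3 / 2) : ℝ) * (x + 1) := by
  induction m generalizing x with
  | zero =>
    show (0:ℝ) ≤ _
    positivity
  | succ m ih =>
    set c : ℝ := (2 : ℝ) ^ ((3 / 2) : ℝ) with hc
    have hc2 : c ^ 2 = 8 := by
      rw [hc, ← Real.rpow_natCast ((2:ℝ) ^ ((3/2):ℝ)) 2, ← Real.rpow_mul (by norm_num)]
      norm_num
    have hcge : (2:ℝ) ≤ c := by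
      calc (2:ℝ) = (2:ℝ) ^ (1:ℝ) := by norm_num
        _ ≤ c := by
          apply Real.rpow_le_rpow_left_iff (x := (2:ℝ)) (by norm_num) |>.mpr
          norm_num
    have h1 : 0 ≤ C m (x + 2) := C_nonneg m (x + 2) (by linarith)
    have h2 : C m (x + 2) ≤ c * (x + 3) := by
      have := ih (x + 2) (by linarith)
      calc C m (x + 2) ≤ c * (x + 2 + 1) := this
        _ = c * (x + 3) := by ring
    have hA : (0:ℝ) ≤ 1 + 3 * x + x ^ 2 * C m (x + 2) := by positivity
    have hB : 1 + 3 * x + x ^ 2 * C m (x + 2) ≤ (c * (x + 1)) ^ 3 := by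
      have hx2 : 0 ≤ x ^ 2 := sq_nonneg x
      nlinarith [mul_le_mul_of_nonneg_left h2 hx2, sq_nonneg (x - 1), sq_nonneg x,
        mul_pos (lt_of_lt_of_le (by norm_num : (0:ℝ) < 2) hcge) (by linarith : (0:ℝ) < x)]
    have key : C (m + 1) x = (1 + 3 * x + x ^ 2 * C m (x + 2)) ^ (1 / 3 : ℝ) := rfl
    rw [key]
    calc (1 + 3 * x + x ^ 2 * C m (x + 2)) ^ (1 / 3 : ℝ)
        ≤ ((c * (x + 1)) ^ 3) ^ (1 / 3 : ℝ) :=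
          Real.rpow_le_rpow hA hB (by norm_num)
      _ = c * (x + 1) := by
          rw [← Real.rpow_natCast (c * (x + 1)) 3, ← Real.rpow_mul (by positivity)]
          norm_num
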